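/- (Lower bound for the conditional variance of fractional Brownian motion via its Volterra kernel.) Let H ∈ (0,1/2) and T > 0. Define, for 0 < s ≤ t, K_H(t,s) := t^{H−1/2} s^{1/2−H} (t−s)^{H−1/2} + (1/2 − H) s^{1/2−H} ∫_s^t (r−s)^{H−1/2} r^{H−3/2} dr. Then there exists a constant c > 0, depending only on H and T, such that for all 0 ≤ s < t ≤ T: ∫_s^t K_H(t,r)² dr ≥ c (t − s)^{2H}. -/

import Mathlib

open MeasureTheory intervalIntegral

/-- The Volterra kernel of fractional Brownian motion with Hurst index `H ∈ (0,1/2)`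
(up to a positive multiplicative constant). -/
noncomputable def fbmKernel (H t s : ℝ) : ℝ :=
  t ^ (H - 1/2) * s ^ (1/2 - H) * (t - s) ^ (H - 1/2) +
    (1/2 - H) * s ^ (1/2 - H) * ∫ r in s..t, (r - s) ^ (H - 1/2) * r ^ (H - 3/2)

/-!
For `r ≥ (s + t) / 2` the second summand of `K_H(t, r)` is nonnegative and the first is at least
`2^(H - 1/2) (t - r)^(H - 1/2)`; integrating the square of this over the upper half of `[s, t]`
already gives a multiple of `(t - s)^(2H)`. The analytic work is the integrability of
`K_H(t, ·)²`, without which the integral would be `0`: bounding `u^(H - 3/2)` by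
`r^((3H - 2)/2) (u - r)^(-(1 + H)/2)` shows `K_H(t, r) = O((t - r)^(H - 1/2) + r^((H - 1)/2))`.
-/

open Set

lemma measurable_setIntegral_Ioc_of_measurable_uncurry {f : ℝ → ℝ → ℝ}
    (hf : Measurable (Function.uncurry f)) {l u : ℝ → ℝ} (hl : Measurable l)
    (hu : Measurable u) : Measurable fun a => ∫ x in Ioc (l a) (u a), f a x := by
  have hS : MeasurableSet {p : ℝ × ℝ | l p.1 < p.2 ∧ p.2 ≤ u p.1} :=
    (measurableSet_lt (hl.comp measurable_fst) measurable_snd).inter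
      (measurableSet_le measurable_snd (hu.comp measurable_fst))
  have := ((hf.indicator hS).stronglyMeasurable.integral_prod_right' (ν := volume)).measurable
  convert this using 2 with a
  rw [← MeasureTheory.integral_indicator measurableSet_Ioc]
  rfl

lemma measurable_intervalIntegral_of_measurable_uncurry {f : ℝ → ℝ → ℝ}
    (hf : Measurable (Function.uncurry f)) {l u : ℝ → ℝ} (hl : Measurable l)
    (hu : Measurable u) : Measurable fun a => ∫ x in l a..u a, f a x :=
  (measurable_setIntegral_Ioc_of_measurable_uncurry hf hl hu).sub
    (measurable_setIntegral_Ioc_of_measurable_uncurry hf hu hl)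

lemma integral_sub_const_rpow {p : ℝ} (hp : -1 < p) (a b : ℝ) :
    ∫ x in a..b, (x - a) ^ p = (b - a) ^ (p + 1) / (p + 1) := by
  rw [integral_comp_sub_right (fun x => x ^ p), sub_self, integral_rpow (Or.inl hp),
    Real.zero_rpow (by linarith), sub_zero]

lemma intervalIntegrable_sub_const_rpow {p : ℝ} (hp : -1 < p) (a b : ℝ) :
    IntervalIntegrable (fun x => (x - a) ^ p) volume a b := by
  simpa using (intervalIntegrable_rpow' hp (a := 0) (b := b - a)).comp_sub_right a

lemma integral_const_sub_rpow {p : ℝ} (hp : -1 < p) (a b : ℝ) :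
    ∫ x in a..b, (b - x) ^ p = (b - a) ^ (p + 1) / (p + 1) := by
  rw [integral_comp_sub_left (fun x => x ^ p), sub_self, integral_rpow (Or.inl hp),
    Real.zero_rpow (by linarith), sub_zero]

lemma intervalIntegrable_const_sub_rpow {p : ℝ} (hp : -1 < p) (a b : ℝ) :
    IntervalIntegrable (fun x => (b - x) ^ p) volume a b := by
  simpa using (intervalIntegrable_rpow' hp (a := b - a) (b := 0)).comp_sub_left b

lemma rpow_neg_add_le_mul {r u a b : ℝ} (hr : 0 < r) (hru : r < u) (ha : 0 ≤ a) (hb : 0 ≤ b) :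
    u ^ (-(a + b)) ≤ r ^ (-a) * (u - r) ^ (-b) := by
  rw [neg_add, Real.rpow_add (hr.trans hru)]
  exact mul_le_mul (Real.rpow_le_rpow_of_nonpos hr hru.le (by linarith))
    (Real.rpow_le_rpow_of_nonpos (by linarith) (by linarith) (by linarith))
    (Real.rpow_nonneg (by linarith) _) (by positivity)

lemma rpow_neg_mul_rpow_eq_div_rpow {x y : ℝ} (hx : 0 ≤ x) (hy : 0 ≤ y) (p : ℝ) :
    y ^ (-p) * x ^ p = (x / y) ^ p := by
  rw [Real.rpow_neg hy, Real.div_rpow hx hy, div_eq_inv_mul]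

section fbmKernel

variable {H t r : ℝ}

lemma fbmKernel_eq (hr : 0 ≤ r) (hrt : r ≤ t) :
    fbmKernel H t r = (r / t) ^ (1/2 - H) * (t - r) ^ (H - 1/2) +
      (1/2 - H) * r ^ (1/2 - H) * ∫ u in r..t, (u - r) ^ (H - 1/2) * u ^ (H - 3/2) := by
  rw [fbmKernel, ← rpow_neg_mul_rpow_eq_div_rpow hr (hr.trans hrt), neg_sub]

lemma fbmKernel_integrand_le (hH0 : 0 < H) (hH : H < 1/2) {u : ℝ} (hr : 0 < r) (hru : r < u) :
    (u - r) ^ (H - 1/2) * u ^ (H - 3/2) ≤ r ^ ((3*H - 2)/2) * (u - r) ^ (H/2 - 1) := by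
  have h := rpow_neg_add_le_mul hr hru (a := 1 - 3*H/2) (b := (1 + H)/2) (by linarith)
    (by linarith)
  rw [show -((1 - 3*H/2) + (1 + H)/2) = H - 3/2 by ring] at h
  calc (u - r) ^ (H - 1/2) * u ^ (H - 3/2)
      ≤ (u - r) ^ (H - 1/2) * (r ^ (-(1 - 3*H/2)) * (u - r) ^ (-((1 + H)/2))) :=
        mul_le_mul_of_nonneg_left h (Real.rpow_nonneg (by linarith) _)
    _ = r ^ ((3*H - 2)/2) * (u - r) ^ (H/2 - 1) := by
        rw [mul_left_comm, ← Real.rpow_add (by linarith)]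
        ring_nf

lemma fbmKernel_inner_integral_nonneg (hr : 0 ≤ r) (hrt : r ≤ t) :
    0 ≤ ∫ u in r..t, (u - r) ^ (H - 1/2) * u ^ (H - 3/2) :=
  integral_nonneg hrt fun u hu =>
    mul_nonneg (Real.rpow_nonneg (by linarith [hu.1]) _) (Real.rpow_nonneg (hr.trans hu.1) _)

lemma fbmKernel_inner_integral_le (hH0 : 0 < H) (hH : H < 1/2) (hr : 0 < r) (hrt : r ≤ t) :
    ∫ u in r..t, (u - r) ^ (H - 1/2) * u ^ (H - 3/2)
      ≤ r ^ ((3*H - 2)/2) * ((t - r) ^ (H/2) / (H/2)) := by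
  have hp : -1 < H/2 - 1 := by linarith
  calc ∫ u in r..t, (u - r) ^ (H - 1/2) * u ^ (H - 3/2)
      ≤ ∫ u in r..t, r ^ ((3*H - 2)/2) * (u - r) ^ (H/2 - 1) := by
        rw [integral_of_le hrt, integral_of_le hrt]
        refine integral_mono_of_nonneg
          (ae_restrict_of_forall_mem measurableSet_Ioc fun u hu => ?_)
          ((intervalIntegrable_sub_const_rpow hp r t).const_mul _).1
          (ae_restrict_of_forall_mem measurableSet_Ioc fun u hu =>
            fbmKernel_integrand_le hH0 hH hr hu.1)
        exact mul_nonneg (Real.rpow_nonneg (by linarith [hu.1]) _)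
          (Real.rpow_nonneg (by linarith [hu.1]) _)
    _ = r ^ ((3*H - 2)/2) * ((t - r) ^ (H/2) / (H/2)) := by
        rw [intervalIntegral.integral_const_mul, integral_sub_const_rpow hp, sub_add_cancel]

lemma le_fbmKernel (hH : H < 1/2) (hr : 0 ≤ r) (hrt : r ≤ t) :
    (r / t) ^ (1/2 - H) * (t - r) ^ (H - 1/2) ≤ fbmKernel H t r := by
  rw [fbmKernel_eq hr hrt]
  exact le_add_of_nonneg_right (mul_nonneg (mul_nonneg (by linarith) (Real.rpow_nonneg hr _))
    (fbmKernel_inner_integral_nonneg hr hrt))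

lemma fbmKernel_nonneg (hH : H < 1/2) (hr : 0 ≤ r) (hrt : r ≤ t) : 0 ≤ fbmKernel H t r :=
  (mul_nonneg (Real.rpow_nonneg (div_nonneg hr (hr.trans hrt)) _)
    (Real.rpow_nonneg (sub_nonneg.2 hrt) _)).trans (le_fbmKernel hH hr hrt)

lemma sq_fbmKernel_ge (hH : H < 1/2) (ht : 0 < t) (hr : t / 2 ≤ r) (hrt : r ≤ t) :
    (1/2) ^ (1 - 2*H) * (t - r) ^ (2*H - 1) ≤ fbmKernel H t r ^ 2 := by
  have hr0 : 0 ≤ r := by linarith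
  have half_le : (1/2 : ℝ) ≤ r / t := by rw [le_div_iff₀ ht]; linarith
  have h : (1/2) ^ (1/2 - H) * (t - r) ^ (H - 1/2) ≤ fbmKernel H t r :=
    (mul_le_mul_of_nonneg_right (Real.rpow_le_rpow (by norm_num) half_le (by linarith))
      (Real.rpow_nonneg (sub_nonneg.2 hrt) _)).trans (le_fbmKernel hH hr0 hrt)
  calc (1/2) ^ (1 - 2*H) * (t - r) ^ (2*H - 1)
      = ((1/2) ^ (1/2 - H) * (t - r) ^ (H - 1/2)) ^ 2 := by
        rw [mul_pow, ← Real.rpow_mul_natCast (by norm_num),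
          ← Real.rpow_mul_natCast (sub_nonneg.2 hrt)]
        ring_nf
    _ ≤ fbmKernel H t r ^ 2 := pow_le_pow_left₀ (by positivity) h 2

lemma fbmKernel_le (hH0 : 0 < H) (hH : H < 1/2) (hr : 0 < r) (hrt : r ≤ t) :
    fbmKernel H t r ≤ (t - r) ^ (H - 1/2) + (1/2 - H) * (2/H) * t ^ (H/2) * r ^ ((H - 1)/2) := by
  have ht : 0 < t := hr.trans_le hrt
  rw [fbmKernel_eq hr.le hrt]
  refine add_le_add (mul_le_of_le_one_left (Real.rpow_nonneg (sub_nonneg.2 hrt) _)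
    (Real.rpow_le_one (by positivity) ((div_le_one ht).2 hrt) (by linarith))) ?_
  have hr_pow : r ^ (1/2 - H) * r ^ ((3*H - 2)/2) = r ^ ((H - 1)/2) := by
    rw [← Real.rpow_add hr]
    ring_nf
  calc (1/2 - H) * r ^ (1/2 - H) * ∫ u in r..t, (u - r) ^ (H - 1/2) * u ^ (H - 3/2)
      ≤ (1/2 - H) * r ^ (1/2 - H) * (r ^ ((3*H - 2)/2) * ((t - r) ^ (H/2) / (H/2))) :=
        mul_le_mul_of_nonneg_left (fbmKernel_inner_integral_le hH0 hH hr hrt)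
          (mul_nonneg (by linarith) (Real.rpow_nonneg hr.le _))
    _ ≤ (1/2 - H) * r ^ (1/2 - H) * (r ^ ((3*H - 2)/2) * (t ^ (H/2) / (H/2))) := by
        gcongr
        linarith
    _ = (1/2 - H) * (2/H) * t ^ (H/2) * r ^ ((H - 1)/2) := by
        rw [← hr_pow]
        field_simp

lemma sq_fbmKernel_le (hH0 : 0 < H) (hH : H < 1/2) (hr : 0 < r) (hrt : r ≤ t) :
    fbmKernel H t r ^ 2 ≤
      2 * ((t - r) ^ (2*H - 1) + ((1/2 - H) * (2/H) * t ^ (H/2)) ^ 2 * r ^ (H - 1)) :=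
  calc fbmKernel H t r ^ 2
      ≤ ((t - r) ^ (H - 1/2) + (1/2 - H) * (2/H) * t ^ (H/2) * r ^ ((H - 1)/2)) ^ 2 :=
        pow_le_pow_left₀ (fbmKernel_nonneg hH hr.le hrt) (fbmKernel_le hH0 hH hr hrt) 2
    _ ≤ 2 * (((t - r) ^ (H - 1/2)) ^ 2 + ((1/2 - H) * (2/H) * t ^ (H/2) * r ^ ((H - 1)/2)) ^ 2) :=
        add_sq_le
    _ = 2 * ((t - r) ^ (2*H - 1) + ((1/2 - H) * (2/H) * t ^ (H/2)) ^ 2 * r ^ (H - 1)) := by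
        rw [mul_pow _ (r ^ _), ← Real.rpow_mul_natCast (sub_nonneg.2 hrt),
          ← Real.rpow_mul_natCast hr.le]
        ring_nf

lemma measurable_fbmKernel (H t : ℝ) : Measurable (fbmKernel H t) := by
  unfold fbmKernel
  refine Measurable.add (by fun_prop) (Measurable.mul (by fun_prop) ?_)
  exact measurable_intervalIntegral_of_measurable_uncurry (by fun_prop) measurable_id
    measurable_const

lemma intervalIntegrable_sq_fbmKernel (hH0 : 0 < H) (hH : H < 1/2) {s : ℝ} (hs : 0 ≤ s)
    (hst : s ≤ t) : IntervalIntegrable (fun r => fbmKernel H t r ^ 2) volume s t := by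
  refine IntervalIntegrable.mono_fun'
    (g := fun r => 2 * ((t - r) ^ (2*H - 1) + ((1/2 - H) * (2/H) * t ^ (H/2)) ^ 2 * r ^ (H - 1)))
    (((intervalIntegrable_const_sub_rpow (by linarith) s t).add
      ((intervalIntegrable_rpow' (by linarith)).const_mul _)).const_mul 2)
    ((measurable_fbmKernel H t).pow_const 2).aestronglyMeasurable ?_
  rw [uIoc_of_le hst]
  filter_upwards [ae_restrict_mem measurableSet_Ioc] with r hr
  rw [Real.norm_of_nonneg (sq_nonneg _)]
  exact sq_fbmKernel_le hH0 hH (hs.trans_lt hr.1) hr.2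

end fbmKernel

theorem fbm_kernel_variance_lower_bound_general
    (H : ℝ) (hH0 : 0 < H) (hH : H < 1/2) (T : ℝ) :
    ∃ c : ℝ, 0 < c ∧ ∀ s t : ℝ, 0 ≤ s → s < t → t ≤ T →
      c * (t - s) ^ (2 * H) ≤ ∫ r in s..t, (fbmKernel H t r) ^ 2 := by
  refine ⟨(1/2) ^ (1 - 2*H) / 2 ^ (2*H) / (2*H), by positivity, fun s t hs hst _ => ?_⟩
  set m := (s + t) / 2 with hm
  have hp : -1 < 2*H - 1 := by linarith
  calc (1/2) ^ (1 - 2*H) / 2 ^ (2*H) / (2*H) * (t - s) ^ (2 * H)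
      = ∫ r in m..t, (1/2) ^ (1 - 2*H) * (t - r) ^ (2*H - 1) := by
        rw [intervalIntegral.integral_const_mul, integral_const_sub_rpow hp, sub_add_cancel,
          show t - m = (t - s) / 2 by ring, Real.div_rpow (x := t - s) (by linarith) zero_le_two]
        ring
    _ ≤ ∫ r in m..t, fbmKernel H t r ^ 2 :=
        integral_mono_on (by linarith) ((intervalIntegrable_const_sub_rpow hp m t).const_mul _)
          (intervalIntegrable_sq_fbmKernel hH0 hH (by linarith) (by linarith))
          fun r hr => sq_fbmKernel_ge hH (by linarith) (by linarith [hr.1]) hr.2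
    _ ≤ ∫ r in s..t, fbmKernel H t r ^ 2 :=
        integral_mono_interval (by linarith) (by linarith) le_rfl
          (ae_of_all _ fun r => sq_nonneg _) (intervalIntegrable_sq_fbmKernel hH0 hH hs hst.le)

/-- **Lower bound for the conditional variance of fractional Brownian motion via its
Volterra kernel.** -/
theorem fbm_kernel_variance_lower_bound
    (H : ℝ) (hH0 : 0 < H) (hH : H < 1/2) (T : ℝ) (hT : 0 < T) :
    ∃ c : ℝ, 0 < c ∧ ∀ s t : ℝ, 0 ≤ s → s < t → t ≤ T →
      c * (t - s) ^ (2 * H) ≤ ∫ r in s..t, (fbmKernel H t r) ^ 2 :=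
  fbm_kernel_variance_lower_bound_general H hH0 hH T
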